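/- Let z ∈ W^{2,2}([a,b];ℝ^{n_p}) satisfy B_c z_b = 0, with B_c B_d invertible, and let x ∈ ℝ^{n₀}. Then |x|² + ‖z‖_{L²}² = ⟨(x, z_ss), 𝒯(x, z_ss)⟩_X, where 𝒯 = 𝒫_{I,0,0,0,G₁,G₂}* ∘ 𝒫_{I,0,0,0,G₁,G₂} and * denotes the adjoint with respect to ⟨·,·⟩_X. -/

import Mathlib

open MeasureTheory Matrix Set

noncomputable section

/-- The operator `𝒫_{P,Q₁,Q₂,S,R₁,R₂}` on `ℝ^m × L²([a,b];ℝⁿ)`, applied to a pair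
`u = (x, z)`.  All integrals are taken entrywise. -/
def Pop (a b : ℝ) {m n : ℕ}
    (P : Matrix (Fin m) (Fin m) ℝ)
    (Q1 : ℝ → Matrix (Fin m) (Fin n) ℝ)
    (Q2 : ℝ → Matrix (Fin n) (Fin m) ℝ)
    (S : ℝ → Matrix (Fin n) (Fin n) ℝ)
    (R1 R2 : ℝ → ℝ → Matrix (Fin n) (Fin n) ℝ)
    (u : (Fin m → ℝ) × (ℝ → Fin n → ℝ)) :
    (Fin m → ℝ) × (ℝ → Fin n → ℝ) :=
  (P.mulVec u.1 + (fun i => ∫ s in a..b, (Q1 s).mulVec (u.2 s) i),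
   fun s => (Q2 s).mulVec u.1 + (S s).mulVec (u.2 s)
     + (fun i => ∫ η in a..s, (R1 s η).mulVec (u.2 η) i)
     + (fun i => ∫ η in s..b, (R2 s η).mulVec (u.2 η) i))

/-- The inner product on `X = ℝ^m × L²([a,b];ℝⁿ)`:
`⟨(x₁,x₂),(z₁,z₂)⟩_X = x₁ᵀz₁ + ∫ₐᵇ x₂(s)ᵀ z₂(s) ds`. -/
def innerX (a b : ℝ) {m n : ℕ}
    (u v : (Fin m → ℝ) × (ℝ → Fin n → ℝ)) : ℝ :=
  u.1 ⬝ᵥ v.1 + ∫ s in a..b, u.2 s ⬝ᵥ v.2 s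

/-- `z ∈ L²([a,b];ℝⁿ)`. -/
def MemL2 (a b : ℝ) {n : ℕ} (z : ℝ → Fin n → ℝ) : Prop :=
  MemLp z 2 (volume.restrict (Icc a b))

/-- A bounded measurable matrix-valued function on `[a,b]`. -/
def BddMeas (a b : ℝ) {k l : ℕ} (F : ℝ → Matrix (Fin k) (Fin l) ℝ) : Prop :=
  (∀ i j, Measurable fun s => F s i j) ∧
    ∃ C, ∀ s ∈ Icc a b, ∀ i j, |F s i j| ≤ C

/-- A bounded measurable matrix-valued kernel on `[a,b] × [a,b]`. -/
def BddMeas2 (a b : ℝ) {k l : ℕ} (F : ℝ → ℝ → Matrix (Fin k) (Fin l) ℝ) : Prop :=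
  (∀ i j, Measurable fun p : ℝ × ℝ => F p.1 p.2 i j) ∧
    ∃ C, ∀ s ∈ Icc a b, ∀ η ∈ Icc a b, ∀ i j, |F s η i j| ≤ C

/-- Entrywise integral of a matrix-valued function. -/
def mInt {k l : ℕ} (c d : ℝ) (F : ℝ → Matrix (Fin k) (Fin l) ℝ) :
    Matrix (Fin k) (Fin l) ℝ :=
  Matrix.of fun i j => ∫ t in c..d, F t i j

/-- The block matrix `B_d ∈ ℝ^{4n_p × 2n_p}` with block rows
`[I, 0]`, `[I, (b−a)I]`, `[0, I]`, `[0, I]`. -/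
def Bdm (a b : ℝ) (np : ℕ) : Matrix (Fin 4 × Fin np) (Fin 2 × Fin np) ℝ :=
  Matrix.of fun p q =>
    (![![(1 : Matrix (Fin np) (Fin np) ℝ), 0],
       ![1, (b - a) • 1],
       ![0, 1],
       ![0, 1]] p.1 q.1) p.2 q.2

/-- The block column `col(0, (b−η)I, 0, I) ∈ ℝ^{4n_p × n_p}`. -/
def colE (b : ℝ) (np : ℕ) (η : ℝ) : Matrix (Fin 4 × Fin np) (Fin np) ℝ :=
  Matrix.of fun p j =>
    (![(0 : Matrix (Fin np) (Fin np) ℝ), (b - η) • 1, 0, 1] p.1) p.2 j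

/-- `B_f(η) = (B_c B_d)⁻¹ B_c col(0,(b−η)I,0,I)`. -/
def Bfm (a b : ℝ) {np : ℕ}
    (Bc : Matrix (Fin 2 × Fin np) (Fin 4 × Fin np) ℝ) (η : ℝ) :
    Matrix (Fin 2 × Fin np) (Fin np) ℝ :=
  (Bc * Bdm a b np)⁻¹ * Bc * colE b np η

/-- The block row `[I, (s−a)I] ∈ ℝ^{n_p × 2n_p}`. -/
def rowIA (a : ℝ) (np : ℕ) (s : ℝ) : Matrix (Fin np) (Fin 2 × Fin np) ℝ :=
  Matrix.of fun i q => (![(1 : Matrix (Fin np) (Fin np) ℝ), (s - a) • 1] q.1) i q.2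

/-- The block row `[0, I] ∈ ℝ^{n_p × 2n_p}`. -/
def rowZI (np : ℕ) : Matrix (Fin np) (Fin 2 × Fin np) ℝ :=
  Matrix.of fun i q => (![(0 : Matrix (Fin np) (Fin np) ℝ), 1] q.1) i q.2

/-- `B_a(s,η) = −[I,(s−a)I] B_f(η)`. -/
def Bam (a b : ℝ) {np : ℕ}
    (Bc : Matrix (Fin 2 × Fin np) (Fin 4 × Fin np) ℝ) (s η : ℝ) :
    Matrix (Fin np) (Fin np) ℝ :=
  -(rowIA a np s * Bfm a b Bc η)

/-- `B_b(η) = −[0,I] B_f(η)`. -/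
def Bbm (a b : ℝ) {np : ℕ}
    (Bc : Matrix (Fin 2 × Fin np) (Fin 4 × Fin np) ℝ) (η : ℝ) :
    Matrix (Fin np) (Fin np) ℝ :=
  -(rowZI np * Bfm a b Bc η)

/-- `G₁(s,η) = B_a(s,η) + (s−η)I`. -/
def G1m (a b : ℝ) {np : ℕ}
    (Bc : Matrix (Fin 2 × Fin np) (Fin 4 × Fin np) ℝ) (s η : ℝ) :
    Matrix (Fin np) (Fin np) ℝ :=
  Bam a b Bc s η + (s - η) • 1

/-- `G₂(s,η) = B_a(s,η)`. -/
def G2m (a b : ℝ) {np : ℕ}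
    (Bc : Matrix (Fin 2 × Fin np) (Fin 4 × Fin np) ℝ) (s η : ℝ) :
    Matrix (Fin np) (Fin np) ℝ :=
  Bam a b Bc s η

/-- `G₃(s,η) = B_b(η) + I`. -/
def G3m (a b : ℝ) {np : ℕ}
    (Bc : Matrix (Fin 2 × Fin np) (Fin 4 × Fin np) ℝ) (_s η : ℝ) :
    Matrix (Fin np) (Fin np) ℝ :=
  Bbm a b Bc η + 1

/-- `G₄(s,η) = B_b(η)`. -/
def G4m (a b : ℝ) {np : ℕ}
    (Bc : Matrix (Fin 2 × Fin np) (Fin 4 × Fin np) ℝ) (_s η : ℝ) :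
    Matrix (Fin np) (Fin np) ℝ :=
  Bbm a b Bc η

/-- The boundary vector `z_b = col(z(a), z(b), z_s(a), z_s(b)) ∈ ℝ^{4n_p}`. -/
def zbv (a b : ℝ) {np : ℕ} (z zs : ℝ → Fin np → ℝ) : Fin 4 × Fin np → ℝ :=
  fun p => ![z a, z b, zs a, zs b] p.1 p.2
/-- The operator `𝒯 = 𝒫_{I,0,0,0,G₁,G₂}* ∘ 𝒫_{I,0,0,0,G₁,G₂}`, applied to `u`;
the adjoint `𝒫_{I,0,0,0,G₁,G₂}*` equals `𝒫_{I,0,0,0,G₂(η,s)ᵀ,G₁(η,s)ᵀ}`. -/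
def Tapply (a b : ℝ) {n0 np : ℕ}
    (Bc : Matrix (Fin 2 × Fin np) (Fin 4 × Fin np) ℝ)
    (u : (Fin n0 → ℝ) × (ℝ → Fin np → ℝ)) :
    (Fin n0 → ℝ) × (ℝ → Fin np → ℝ) :=
  Pop a b 1 (fun _ => 0) (fun _ => 0) (fun _ => 0)
    (fun s η => (G2m a b Bc η s)ᵀ) (fun s η => (G1m a b Bc η s)ᵀ)
    (Pop a b 1 (fun _ => 0) (fun _ => 0) (fun _ => 0) (G1m a b Bc) (G2m a b Bc) u)


/-!
Taylor's formula `z(s) = z(a) + (s - a) z_s(a) + ∫ₐˢ (s - η) z_ss(η) dη` evaluated at `s = b`,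
together with its derivative, writes the boundary vector as `z_b = B_d col(z(a), z_s(a)) + ∫ₐᵇ
col(0, (b - η)I, 0, I) z_ss(η) dη`; since `B_c z_b = 0` and `B_c B_d` is invertible, this gives
`col(z(a), z_s(a)) = -∫ₐᵇ B_f(η) z_ss(η) dη`. Substituting back into Taylor's formula shows that
`𝒫_{I,0,0,0,G₁,G₂}` maps `(x, z_ss)` to `(x, z)` on `[a, b]`. Fubini's theorem on the two triangles
of `[a, b]²` identifies the adjoint of `𝒫_{I,0,0,0,R₁,R₂}` with `𝒫_{I,0,0,0,R₂(η,s)ᵀ,R₁(η,s)ᵀ}`,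
so `⟨(x, z_ss), 𝒯(x, z_ss)⟩_X = ‖𝒫_{I,0,0,0,G₁,G₂}(x, z_ss)‖²_X = |x|² + ‖z‖²_{L²}`.
-/

section PiIntegrals

variable {ι : Type*} [Fintype ι] {c d : ℝ}

theorem eval_intervalIntegral {F : ℝ → ι → ℝ} (hF : IntervalIntegrable F volume c d) (i : ι) :
    (∫ t in c..d, F t) i = ∫ t in c..d, F t i :=
  ((ContinuousLinearMap.proj (R := ℝ) (φ := fun _ : ι => ℝ) i).intervalIntegral_comp_comm hF).symm

theorem dotProduct_intervalIntegral (v : ι → ℝ) {F : ℝ → ι → ℝ}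
    (hF : IntervalIntegrable F volume c d) :
    v ⬝ᵥ ∫ t in c..d, F t = ∫ t in c..d, v ⬝ᵥ F t :=
  ((dotProductBilin ℝ ℝ v).toContinuousLinearMap.intervalIntegral_comp_comm hF).symm

theorem intervalIntegral_dotProduct {F : ℝ → ι → ℝ} (hF : IntervalIntegrable F volume c d)
    (v : ι → ℝ) :
    (∫ t in c..d, F t) ⬝ᵥ v = ∫ t in c..d, F t ⬝ᵥ v := by
  simp_rw [dotProduct_comm _ v]
  exact dotProduct_intervalIntegral v hF

theorem mulVec_intervalIntegral {κ : Type*} [Fintype κ] (M : Matrix κ ι ℝ) {F : ℝ → ι → ℝ}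
    (hF : IntervalIntegrable F volume c d) :
    M *ᵥ ∫ t in c..d, F t = ∫ t in c..d, M *ᵥ F t :=
  ((Matrix.mulVecLin M).toContinuousLinearMap.intervalIntegral_comp_comm hF).symm

end PiIntegrals

section Integrability

variable {X ι κ : Type*} [TopologicalSpace X] [T2Space X] [MeasurableSpace X]
  [OpensMeasurableSpace X] {μ : Measure X} [Fintype ι] [Fintype κ] {K : Set X}

theorem MeasureTheory.IntegrableOn.dotProduct_continuousOn {f g : X → ι → ℝ}
    (hf : IntegrableOn f K μ) (hg : ContinuousOn g K) (hK : IsCompact K) :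
    IntegrableOn (fun x => f x ⬝ᵥ g x) K μ :=
  integrable_finsetSum _ fun i _ =>
    IntegrableOn.mul_continuousOn (hf.eval i) ((continuous_apply i).comp_continuousOn hg) hK

theorem MeasureTheory.IntegrableOn.continuousOn_mulVec {M : X → Matrix κ ι ℝ} {f : X → ι → ℝ}
    (hM : ContinuousOn M K) (hf : IntegrableOn f K μ) (hK : IsCompact K) :
    IntegrableOn (fun x => M x *ᵥ f x) K μ :=
  Integrable.of_eval fun i => by
    have h := hf.dotProduct_continuousOn ((continuous_apply i).comp_continuousOn hM) hK
    simp_rw [dotProduct_comm (f _)] at h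
    exact h

theorem MeasureTheory.IntegrableOn.intervalIntegrable_mulVec {a b : ℝ} {M : ℝ → Matrix κ ι ℝ}
    {f : ℝ → ι → ℝ} (hM : ContinuousOn M (Icc a b)) (hf : IntegrableOn f (Icc a b))
    {c d : ℝ} (hc : c ∈ Icc a b) (hd : d ∈ Icc a b) :
    IntervalIntegrable (fun t => M t *ᵥ f t) volume c d :=
  ((hf.continuousOn_mulVec hM isCompact_Icc).mono_set (uIcc_subset_Icc hc hd)).intervalIntegrable

theorem integrableOn_Icc_prod_dotProduct_mulVec {a b : ℝ} {f g : ℝ → ι → ℝ}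
    {R : ℝ → ℝ → Matrix ι ι ℝ} (hf : IntegrableOn f (Icc a b)) (hg : ContinuousOn g (Icc a b))
    (hR : ContinuousOn (Function.uncurry R) (Icc a b ×ˢ Icc a b)) :
    IntegrableOn (Function.uncurry fun s η => f s ⬝ᵥ (R s η *ᵥ g η)) (Icc a b ×ˢ Icc a b) := by
  have hf₁ : IntegrableOn (fun p : ℝ × ℝ => f p.1) (Icc a b ×ˢ Icc a b) := by
    rw [IntegrableOn, Measure.volume_eq_prod, ← Measure.prod_restrict]
    exact hf.comp_fst _
  exact hf₁.dotProduct_continuousOn ((continuous_fst.matrix_mulVec continuous_snd).comp_continuousOn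
    (hR.prodMk (hg.comp continuousOn_snd fun p hp => hp.2))) (isCompact_Icc.prod isCompact_Icc)

end Integrability

section Triangle

variable {E : Type*} [NormedAddCommGroup E] [NormedSpace ℝ E] {a b : ℝ} {f g : ℝ → E}

theorem integral_Ioc_indicator_Iic_add_indicator_Ioi (hf : IntegrableOn f (Ioc a b))
    (hg : IntegrableOn g (Ioc a b)) {t : ℝ} (ht : t ∈ Ioc a b) :
    ∫ x in Ioc a b, ((Iic t).indicator f x + (Ioi t).indicator g x)
      = (∫ x in a..t, f x) + ∫ x in t..b, g x := by
  rw [integral_add (hf.indicator measurableSet_Iic) (hg.indicator measurableSet_Ioi),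
    setIntegral_indicator measurableSet_Iic, setIntegral_indicator measurableSet_Ioi,
    Ioc_inter_Iic, min_eq_right ht.2, Ioc_inter_Ioi, max_eq_right ht.1.le,
    intervalIntegral.integral_of_le ht.1.le, intervalIntegral.integral_of_le ht.2]

theorem integral_Ioc_indicator_Ici_add_indicator_Iio (hf : IntegrableOn f (Ioc a b))
    (hg : IntegrableOn g (Ioc a b)) {t : ℝ} (ht : t ∈ Ioc a b) :
    ∫ x in Ioc a b, ((Ici t).indicator f x + (Iio t).indicator g x)
      = (∫ x in t..b, f x) + ∫ x in a..t, g x := by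
  have hright : Ioc a b ∩ Ici t = Icc t b := by
    ext; simp only [mem_inter_iff, mem_Ioc, mem_Ici, mem_Icc]; grind
  have hleft : Ioc a b ∩ Iio t = Ioo a t := by
    ext; simp only [mem_inter_iff, mem_Ioc, mem_Iio, mem_Ioo]; grind
  rw [integral_add (hf.indicator measurableSet_Ici) (hg.indicator measurableSet_Iio),
    setIntegral_indicator measurableSet_Ici, setIntegral_indicator measurableSet_Iio,
    hright, hleft, integral_Icc_eq_integral_Ioc, ← integral_Ioc_eq_integral_Ioo,
    intervalIntegral.integral_of_le ht.2, intervalIntegral.integral_of_le ht.1.le]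

theorem intervalIntegral_integral_triangle_swap (hab : a ≤ b) {A B : ℝ → ℝ → E}
    (hA : IntegrableOn (Function.uncurry A) (Icc a b ×ˢ Icc a b))
    (hB : IntegrableOn (Function.uncurry B) (Icc a b ×ˢ Icc a b)) :
    ∫ s in a..b, ((∫ η in a..s, A s η) + ∫ η in s..b, B s η)
      = ∫ η in a..b, ((∫ s in η..b, A s η) + ∫ s in a..η, B s η) := by
  set μ := volume.restrict (Ioc a b)
  have hsq : ∀ {F : ℝ × ℝ → E}, IntegrableOn F (Icc a b ×ˢ Icc a b) → Integrable F (μ.prod μ) :=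
    fun hF => by
      rw [Measure.prod_restrict, ← Measure.volume_eq_prod]
      exact hF.mono_set (prod_mono Ioc_subset_Icc_self Ioc_subset_Icc_self)
  have hA' := hsq hA
  have hB' := hsq hB
  set K : ℝ × ℝ → E :=
    {p | p.2 ≤ p.1}.indicator (Function.uncurry A) + {p | p.1 < p.2}.indicator (Function.uncurry B)
  have hK : Integrable K (μ.prod μ) :=
    (hA'.indicator (measurableSet_le measurable_snd measurable_fst)).add
      (hB'.indicator (measurableSet_lt measurable_fst measurable_snd))
  have hrows : ∀ᵐ s ∂μ, ((∫ η in a..s, A s η) + ∫ η in s..b, B s η) = ∫ η, K (s, η) ∂μ := by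
    filter_upwards [hA'.prod_right_ae, hB'.prod_right_ae, ae_restrict_mem measurableSet_Ioc]
      with s hAs hBs hs
    exact (integral_Ioc_indicator_Iic_add_indicator_Ioi hAs hBs hs).symm
  have hcols : ∀ᵐ η ∂μ, ((∫ s in η..b, A s η) + ∫ s in a..η, B s η) = ∫ s, K (s, η) ∂μ := by
    filter_upwards [hA'.prod_left_ae, hB'.prod_left_ae, ae_restrict_mem measurableSet_Ioc]
      with η hAη hBη hη
    exact (integral_Ioc_indicator_Ici_add_indicator_Iio hAη hBη hη).symm
  rw [intervalIntegral.integral_of_le hab, intervalIntegral.integral_of_le hab,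
    integral_congr_ae hrows, integral_congr_ae hcols, integral_integral_swap hK]

end Triangle

section Calculus

variable {E : Type*} [NormedAddCommGroup E] [NormedSpace ℝ E] [CompleteSpace E] {a b : ℝ}

theorem integral_eq_sub_of_hasDerivWithinAt_Icc (hab : a ≤ b) {f f' : ℝ → E}
    (hf : ∀ t ∈ Icc a b, HasDerivWithinAt f (f' t) (Icc a b) t)
    (hf' : IntervalIntegrable f' volume a b) :
    ∫ t in a..b, f' t = f b - f a :=
  intervalIntegral.integral_eq_sub_of_hasDeriv_right_of_le hab
    (fun t ht => (hf t ht).continuousWithinAt)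
    (fun t ht =>
      ((hf t (Ioo_subset_Icc_self ht)).hasDerivAt (Icc_mem_nhds ht.1 ht.2)).hasDerivWithinAt)
    hf'

theorem taylor_first_order_integral_remainder (hab : a ≤ b) {f f' f'' : ℝ → E}
    (hf : ∀ t ∈ Icc a b, HasDerivWithinAt f (f' t) (Icc a b) t)
    (hf' : ∀ t ∈ Icc a b, HasDerivWithinAt f' (f'' t) (Icc a b) t)
    (hf'' : IntegrableOn f'' (Icc a b)) :
    ∫ t in a..b, (b - t) • f'' t = f b - f a - (b - a) • f' a := by
  have hderiv : ∀ t ∈ Icc a b,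
      HasDerivWithinAt (fun t => f t + (b - t) • f' t) ((b - t) • f'' t) (Icc a b) t := by
    intro t ht
    refine ((hf t ht).add (((hasDerivWithinAt_id t _).const_sub b).smul (hf' t ht))).congr_deriv ?_
    simp only [id]
    module
  have hint : IntegrableOn (fun t => (b - t) • f'' t) (Icc a b) :=
    hf''.continuousOn_smul (by fun_prop) isCompact_Icc
  rw [integral_eq_sub_of_hasDerivWithinAt_Icc hab hderiv
    ((intervalIntegrable_iff_integrableOn_Icc_of_le hab).2 hint)]
  simp only [sub_self, zero_smul, add_zero]
  abel

end Calculus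

section BlockMatrices

variable {np : ℕ} (a b : ℝ) (Bc : Matrix (Fin 2 × Fin np) (Fin 4 × Fin np) ℝ)

def blockCol2 (u v : Fin np → ℝ) : Fin 2 × Fin np → ℝ := fun q => ![u, v] q.1 q.2

theorem Bdm_mulVec_blockCol2 (u v : Fin np → ℝ) :
    Bdm a b np *ᵥ blockCol2 u v = fun p => ![u, u + (b - a) • v, v, v] p.1 p.2 := by
  ext ⟨k, i⟩
  fin_cases k <;> simp [Bdm, blockCol2, mulVec, dotProduct, Fintype.sum_prod_type, Matrix.one_apply,
    cons_val_two, cons_val_three, -cons_val]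

theorem colE_mulVec (η : ℝ) (w : Fin np → ℝ) :
    colE b np η *ᵥ w = fun p => ![0, (b - η) • w, 0, w] p.1 p.2 := by
  ext ⟨k, i⟩
  fin_cases k <;>
    simp [colE, mulVec, dotProduct, Matrix.one_apply, cons_val_two, cons_val_three, -cons_val]

theorem rowIA_mulVec_blockCol2 (s : ℝ) (u v : Fin np → ℝ) :
    rowIA a np s *ᵥ blockCol2 u v = u + (s - a) • v := by
  ext i
  simp [rowIA, blockCol2, mulVec, dotProduct, Fintype.sum_prod_type, Matrix.one_apply]

theorem continuous_colE : Continuous (colE b np) :=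
  continuous_matrix fun ⟨k, i⟩ j => by
    fin_cases k <;> simp [colE, cons_val_two, cons_val_three, -cons_val] <;> fun_prop

theorem continuous_rowIA : Continuous (rowIA a np) :=
  continuous_matrix fun i ⟨k, j⟩ => by fin_cases k <;> simp [rowIA] <;> fun_prop

theorem continuous_Bfm : Continuous (Bfm a b Bc) :=
  continuous_const.matrix_mul (continuous_colE b)

theorem continuous_G2m : Continuous (Function.uncurry (G2m a b Bc)) :=
  (((continuous_rowIA a).comp continuous_fst).matrix_mul
    ((continuous_Bfm a b Bc).comp continuous_snd)).neg

theorem continuous_G1m : Continuous (Function.uncurry (G1m a b Bc)) :=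
  (continuous_G2m a b Bc).add ((continuous_fst.sub continuous_snd).smul continuous_const)

end BlockMatrices

theorem ContinuousOn.uncurry_flip_transpose {ι : Type*} {S T : Set ℝ}
    {R : ℝ → ℝ → Matrix ι ι ℝ} (hR : ContinuousOn (Function.uncurry R) (S ×ˢ T)) :
    ContinuousOn (Function.uncurry fun s η => (R η s)ᵀ) (T ×ˢ S) :=
  continuous_id.matrix_transpose.comp_continuousOn
    (hR.comp continuous_swap.continuousOn fun _ hp => ⟨hp.2, hp.1⟩)

section VolterraOperator

variable {a b : ℝ} {m n : ℕ}

theorem Pop_one_zero_fst (R1 R2 : ℝ → ℝ → Matrix (Fin n) (Fin n) ℝ)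
    (u : (Fin m → ℝ) × (ℝ → Fin n → ℝ)) :
    (Pop a b 1 (fun _ => 0) (fun _ => 0) (fun _ => 0) R1 R2 u).1 = u.1 := by
  ext i
  simp [Pop]

theorem Pop_one_zero_snd_apply {R1 R2 : ℝ → ℝ → Matrix (Fin n) (Fin n) ℝ}
    (hR1 : ContinuousOn (Function.uncurry R1) (Icc a b ×ˢ Icc a b))
    (hR2 : ContinuousOn (Function.uncurry R2) (Icc a b ×ˢ Icc a b))
    (x : Fin m → ℝ) {f : ℝ → Fin n → ℝ} (hf : IntegrableOn f (Icc a b)) {s : ℝ}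
    (hs : s ∈ Icc a b) :
    (Pop a b 1 (fun _ => 0) (fun _ => 0) (fun _ => 0) R1 R2 (x, f)).2 s
      = (∫ η in a..s, R1 s η *ᵥ f η) + ∫ η in s..b, R2 s η *ᵥ f η := by
  have hab : a ≤ b := hs.1.trans hs.2
  ext i
  simp only [Pop, zero_mulVec, zero_add, Pi.add_apply]
  rw [eval_intervalIntegral (hf.intervalIntegrable_mulVec (hR1.uncurry_left s hs) ⟨le_rfl, hab⟩ hs),
    eval_intervalIntegral (hf.intervalIntegrable_mulVec (hR2.uncurry_left s hs) hs ⟨hab, le_rfl⟩)]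

theorem innerX_Pop_one_zero_transpose (hab : a ≤ b) {R1 R2 : ℝ → ℝ → Matrix (Fin n) (Fin n) ℝ}
    (hR1 : ContinuousOn (Function.uncurry R1) (Icc a b ×ˢ Icc a b))
    (hR2 : ContinuousOn (Function.uncurry R2) (Icc a b ×ˢ Icc a b))
    (x y : Fin m → ℝ) {f g : ℝ → Fin n → ℝ} (hf : IntegrableOn f (Icc a b))
    (hg : ContinuousOn g (Icc a b)) :
    innerX a b (x, f) (Pop a b 1 (fun _ => 0) (fun _ => 0) (fun _ => 0)
        (fun s η => (R2 η s)ᵀ) (fun s η => (R1 η s)ᵀ) (y, g))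
      = innerX a b (Pop a b 1 (fun _ => 0) (fun _ => 0) (fun _ => 0) R1 R2 (x, f)) (y, g) := by
  have hg' : IntegrableOn g (Icc a b) := hg.integrableOn_Icc
  have hR1' := hR1.uncurry_flip_transpose
  have hR2' := hR2.uncurry_flip_transpose
  simp only [innerX, Pop_one_zero_fst]
  congr 1
  calc ∫ s in a..b, f s ⬝ᵥ (Pop a b 1 (fun _ => 0) (fun _ => 0) (fun _ => 0)
          (fun s η => (R2 η s)ᵀ) (fun s η => (R1 η s)ᵀ) (y, g)).2 s
      = ∫ s in a..b, ((∫ η in a..s, f s ⬝ᵥ ((R2 η s)ᵀ *ᵥ g η))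
          + ∫ η in s..b, f s ⬝ᵥ ((R1 η s)ᵀ *ᵥ g η)) := by
        refine intervalIntegral.integral_congr fun s hs => ?_
        rw [uIcc_of_le hab] at hs
        rw [Pop_one_zero_snd_apply hR2' hR1' y hg' hs, dotProduct_add,
          dotProduct_intervalIntegral _
            (hg'.intervalIntegrable_mulVec (hR2'.uncurry_left s hs) ⟨le_rfl, hab⟩ hs),
          dotProduct_intervalIntegral _
            (hg'.intervalIntegrable_mulVec (hR1'.uncurry_left s hs) hs ⟨hab, le_rfl⟩)]
    _ = ∫ η in a..b, ((∫ s in η..b, f s ⬝ᵥ ((R2 η s)ᵀ *ᵥ g η))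
          + ∫ s in a..η, f s ⬝ᵥ ((R1 η s)ᵀ *ᵥ g η)) :=
        intervalIntegral_integral_triangle_swap hab
          (integrableOn_Icc_prod_dotProduct_mulVec hf hg hR2')
          (integrableOn_Icc_prod_dotProduct_mulVec hf hg hR1')
    _ = ∫ η in a..b,
          (Pop a b 1 (fun _ => 0) (fun _ => 0) (fun _ => 0) R1 R2 (x, f)).2 η ⬝ᵥ g η := by
        refine intervalIntegral.integral_congr fun η hη => ?_
        rw [uIcc_of_le hab] at hη
        rw [Pop_one_zero_snd_apply hR1 hR2 x hf hη, add_dotProduct, add_comm,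
          intervalIntegral_dotProduct
            (hf.intervalIntegrable_mulVec (hR1.uncurry_left η hη) ⟨le_rfl, hab⟩ hη),
          intervalIntegral_dotProduct
            (hf.intervalIntegrable_mulVec (hR2.uncurry_left η hη) hη ⟨hab, le_rfl⟩)]
        simp_rw [dotProduct_mulVec, vecMul_transpose]

end VolterraOperator

section Representation

variable {np : ℕ} {a b : ℝ} {Bc : Matrix (Fin 2 × Fin np) (Fin 4 × Fin np) ℝ}
  {z zs zss : ℝ → Fin np → ℝ}

theorem zbv_eq_Bdm_mulVec_add_integral (hab : a ≤ b)
    (hz : ∀ s ∈ Icc a b, HasDerivWithinAt z (zs s) (Icc a b) s)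
    (hzs : ∀ s ∈ Icc a b, HasDerivWithinAt zs (zss s) (Icc a b) s)
    (hzss : IntegrableOn zss (Icc a b)) :
    zbv a b z zs = Bdm a b np *ᵥ blockCol2 (z a) (zs a) + ∫ η in a..b, colE b np η *ᵥ zss η := by
  have ha : a ∈ Icc a b := ⟨le_rfl, hab⟩
  have hb : b ∈ Icc a b := ⟨hab, le_rfl⟩
  ext ⟨k, i⟩
  rw [Pi.add_apply, eval_intervalIntegral
    (hzss.intervalIntegrable_mulVec (continuous_colE b).continuousOn ha hb),
    Bdm_mulVec_blockCol2]
  simp_rw [colE_mulVec]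
  have hz_i : ∀ t ∈ Icc a b, HasDerivWithinAt (z · i) (zs t i) (Icc a b) t :=
    fun t ht => hasDerivWithinAt_pi.1 (hz t ht) i
  have hzs_i : ∀ t ∈ Icc a b, HasDerivWithinAt (zs · i) (zss t i) (Icc a b) t :=
    fun t ht => hasDerivWithinAt_pi.1 (hzs t ht) i
  have hzss_i : IntegrableOn (zss · i) (Icc a b) := hzss.eval i
  fin_cases k <;> simp [zbv]
  · have := taylor_first_order_integral_remainder hab hz_i hzs_i hzss_i
    simp only [smul_eq_mul] at this
    linarith
  · have := integral_eq_sub_of_hasDerivWithinAt_Icc hab hzs_i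
      (hzss_i.mono_set (uIcc_subset_Icc ha hb)).intervalIntegrable
    linarith

theorem integral_Bfm_mulVec_eq_neg_blockCol2 (hab : a ≤ b) (hdet : IsUnit (Bc * Bdm a b np).det)
    (hz : ∀ s ∈ Icc a b, HasDerivWithinAt z (zs s) (Icc a b) s)
    (hzs : ∀ s ∈ Icc a b, HasDerivWithinAt zs (zss s) (Icc a b) s)
    (hzss : IntegrableOn zss (Icc a b)) (hbc : Bc *ᵥ zbv a b z zs = 0) :
    ∫ η in a..b, Bfm a b Bc η *ᵥ zss η = -blockCol2 (z a) (zs a) := by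
  set I := ∫ η in a..b, colE b np η *ᵥ zss η
  have hBf : ∫ η in a..b, Bfm a b Bc η *ᵥ zss η = ((Bc * Bdm a b np)⁻¹ * Bc) *ᵥ I := by
    rw [mulVec_intervalIntegral _ (hzss.intervalIntegrable_mulVec (continuous_colE b).continuousOn
      ⟨le_rfl, hab⟩ ⟨hab, le_rfl⟩)]
    simp only [Bfm, mulVec_mulVec]
  have hboundary : (Bc * Bdm a b np) *ᵥ blockCol2 (z a) (zs a) + Bc *ᵥ I = 0 := by
    rw [← mulVec_mulVec, ← mulVec_add, ← zbv_eq_Bdm_mulVec_add_integral hab hz hzs hzss, hbc]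
  rw [hBf, ← mulVec_mulVec, eq_neg_of_add_eq_zero_right hboundary, mulVec_neg, mulVec_mulVec,
    nonsing_inv_mul _ hdet, one_mulVec]

theorem integral_G2m_mulVec_eq (hab : a ≤ b) (hdet : IsUnit (Bc * Bdm a b np).det)
    (hz : ∀ s ∈ Icc a b, HasDerivWithinAt z (zs s) (Icc a b) s)
    (hzs : ∀ s ∈ Icc a b, HasDerivWithinAt zs (zss s) (Icc a b) s)
    (hzss : IntegrableOn zss (Icc a b)) (hbc : Bc *ᵥ zbv a b z zs = 0) (s : ℝ) :
    ∫ η in a..b, G2m a b Bc s η *ᵥ zss η = z a + (s - a) • zs a := by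
  have hG2_Bf : ∀ η, G2m a b Bc s η *ᵥ zss η = -(rowIA a np s *ᵥ (Bfm a b Bc η *ᵥ zss η)) := by
    intro η
    rw [G2m, Bam, neg_mulVec, mulVec_mulVec]
  simp_rw [hG2_Bf]
  rw [intervalIntegral.integral_neg, ← mulVec_intervalIntegral _
      (hzss.intervalIntegrable_mulVec (continuous_Bfm a b Bc).continuousOn
        ⟨le_rfl, hab⟩ ⟨hab, le_rfl⟩),
    integral_Bfm_mulVec_eq_neg_blockCol2 hab hdet hz hzs hzss hbc, mulVec_neg, neg_neg,
    rowIA_mulVec_blockCol2]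

theorem integral_G1m_add_integral_G2m_eq (hdet : IsUnit (Bc * Bdm a b np).det)
    (hz : ∀ s ∈ Icc a b, HasDerivWithinAt z (zs s) (Icc a b) s)
    (hzs : ∀ s ∈ Icc a b, HasDerivWithinAt zs (zss s) (Icc a b) s)
    (hzss : IntegrableOn zss (Icc a b)) (hbc : Bc *ᵥ zbv a b z zs = 0) {s : ℝ}
    (hs : s ∈ Icc a b) :
    (∫ η in a..s, G1m a b Bc s η *ᵥ zss η) + ∫ η in s..b, G2m a b Bc s η *ᵥ zss η = z s := by
  have hab : a ≤ b := hs.1.trans hs.2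
  have hG1 : ∀ η, G1m a b Bc s η *ᵥ zss η = G2m a b Bc s η *ᵥ zss η + (s - η) • zss η := by
    intro η
    rw [G1m, G2m, add_mulVec, smul_mulVec, one_mulVec]
  have hG2_int : ∀ {c d : ℝ}, c ∈ Icc a b → d ∈ Icc a b →
      IntervalIntegrable (fun η => G2m a b Bc s η *ᵥ zss η) volume c d :=
    hzss.intervalIntegrable_mulVec ((continuous_G2m a b Bc).uncurry_left s).continuousOn
  have hzss' : IntegrableOn zss (Icc a s) := hzss.mono_set (Icc_subset_Icc_right hs.2)
  have hremainder_int : IntervalIntegrable (fun η => (s - η) • zss η) volume a s :=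
    (intervalIntegrable_iff_integrableOn_Icc_of_le hs.1).2
      (hzss'.continuousOn_smul (by fun_prop) isCompact_Icc)
  have hz' : ∀ t ∈ Icc a s, HasDerivWithinAt z (zs t) (Icc a s) t :=
    fun t ht => (hz t ⟨ht.1, ht.2.trans hs.2⟩).mono (Icc_subset_Icc_right hs.2)
  have hzs' : ∀ t ∈ Icc a s, HasDerivWithinAt zs (zss t) (Icc a s) t :=
    fun t ht => (hzs t ⟨ht.1, ht.2.trans hs.2⟩).mono (Icc_subset_Icc_right hs.2)
  calc (∫ η in a..s, G1m a b Bc s η *ᵥ zss η) + ∫ η in s..b, G2m a b Bc s η *ᵥ zss η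
      = (∫ η in a..b, G2m a b Bc s η *ᵥ zss η) + ∫ η in a..s, (s - η) • zss η := by
        simp_rw [hG1]
        rw [intervalIntegral.integral_add (hG2_int ⟨le_rfl, hab⟩ hs) hremainder_int,
          add_right_comm, intervalIntegral.integral_add_adjacent_intervals
            (hG2_int ⟨le_rfl, hab⟩ hs) (hG2_int hs ⟨hab, le_rfl⟩)]
    _ = (z a + (s - a) • zs a) + (z s - z a - (s - a) • zs a) := by
        rw [integral_G2m_mulVec_eq hab hdet hz hzs hzss hbc,
          taylor_first_order_integral_remainder hs.1 hz' hzs' hzss']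
    _ = z s := by abel

end Representation

/-- For `z ∈ W^{2,2}` with `B_c z_b = 0` (and `B_c B_d` invertible)
and any `x ∈ ℝ^{n₀}`, one has `|x|² + ‖z‖²_{L²} = ⟨(x,z_ss), 𝒯(x,z_ss)⟩_X`. -/
theorem norm_as_T_quadratic_form {n0 np : ℕ} (a b : ℝ) (hab : a < b)
    (Bc : Matrix (Fin 2 × Fin np) (Fin 4 × Fin np) ℝ)
    (hdet : IsUnit (Bc * Bdm a b np).det)
    (x : Fin n0 → ℝ) (z zs zss : ℝ → Fin np → ℝ)
    (hz : ∀ s ∈ Icc a b, HasDerivWithinAt z (zs s) (Icc a b) s)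
    (hzs : ∀ s ∈ Icc a b, HasDerivWithinAt zs (zss s) (Icc a b) s)
    (hzss : MemLp zss 2 (volume.restrict (Icc a b)))
    (hbc : Bc.mulVec (zbv a b z zs) = 0) :
    x ⬝ᵥ x + (∫ s in a..b, z s ⬝ᵥ z s)
      = innerX a b (x, zss) (Tapply a b Bc (x, zss)) := by
  have hzss' : IntegrableOn zss (Icc a b) := hzss.integrable one_le_two
  have hG1 := (continuous_G1m a b Bc).continuousOn (s := Icc a b ×ˢ Icc a b)
  have hG2 := (continuous_G2m a b Bc).continuousOn (s := Icc a b ×ˢ Icc a b)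
  set P := Pop a b 1 (fun _ => 0) (fun _ => 0) (fun _ => 0) (G1m a b Bc) (G2m a b Bc) (x, zss)
  have hP : EqOn P.2 z (Icc a b) := fun s hs =>
    (Pop_one_zero_snd_apply hG1 hG2 x hzss' hs).trans
      (integral_G1m_add_integral_G2m_eq hdet hz hzs hzss' hbc hs)
  have hzc : ContinuousOn z (Icc a b) := fun s hs => (hz s hs).continuousWithinAt
  calc x ⬝ᵥ x + (∫ s in a..b, z s ⬝ᵥ z s) = innerX a b P P := by
        have hP₁ : P.1 = x := Pop_one_zero_fst _ _ _
        rw [innerX, hP₁]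
        congr 1
        refine intervalIntegral.integral_congr fun s hs => ?_
        rw [uIcc_of_le hab.le] at hs
        simp only [hP hs]
    _ = innerX a b (x, zss) (Tapply a b Bc (x, zss)) :=
        (innerX_Pop_one_zero_transpose hab.le hG1 hG2 x P.1 hzss' (hzc.congr hP)).symm

end
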